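/- (Theorem 2.1, d ≥ 3, uniqueness) Let d ≥ 3, n ≥ 1, r > 0, and let F, G : ℤ^d → GL(n,ℂ) satisfy F(y) = G(y) = I for all y ∉ B_r ∩ ℤ^d. If S(F)(γ_z) = S(G)(γ_z) for every z ∈ ℤ^d, then F = G. Here γ_z = {z + t ẑ* : t ∈ ℝ} with ẑ* = (−z_2, z_1, 0,…,0)/√(z_1² + z_2²) when z_1² + z_2² ≠ 0, and γ_z is the line through z with direction (θ_1, θ_2, 0,…,0) for some fixed rational direction (θ_1, θ_2) when z_1 = z_2 = 0. -/

import Mathlib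

/-!
Among the lattice points where `F ≠ G` (a finite set, since both are `1` outside `B_r`) pick
one, `y`, of maximal norm. The ray `γ_y` is orthogonal to `y`, so every other lattice point
`y + t • θ` on it has norm `√(‖y‖² + t²) > ‖y‖`, and there `F = G`. The two ordered products
along `γ_y` thus differ only in the factor at `y`; cancelling the common factors on either side
of it in the group `GL(n, ℂ)` gives `F y = G y`, a contradiction.
-/

noncomputable section

open Matrix

/-- Embedding of the lattice `ℤ^d` into Euclidean `ℝ^d`. -/
def emb {d : ℕ} (z : Fin d → ℤ) : EuclideanSpace ℝ (Fin d) := WithLp.toLp 2 (fun i : Fin d => (z i : ℝ))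

/- Ordered product of `Φ` over `supp`: the factors are multiplied so that larger values
of `key` contribute factors further to the left (the value is `1` if no strictly
`key`-decreasing enumeration of `supp` by a list exists). -/
open Classical in
noncomputable def oprodBy {α G : Type*} [Monoid G] (Φ : α → G) (key : α → ℝ) (supp : Set α) : G :=
  if h : ∃ l : List α, l.Pairwise (fun a b => key b < key a) ∧ ∀ a, a ∈ l ↔ a ∈ supp
  then (h.choose.map Φ).prod else 1

/-- The discrete non-abelian X-ray transform of `F` along the oriented line through `x`
with direction `θ`: the ordered product of `F y` over lattice points `y` on the line,
the point furthest along the orientation contributing the leftmost factor. -/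
noncomputable def discS {d : ℕ} {G : Type*} [Monoid G] (F : (Fin d → ℤ) → G)
    (x θ : EuclideanSpace ℝ (Fin d)) : G :=
  oprodBy F (fun z => ∑ i, ((z i : ℝ) - x i) * θ i)
    {z | (∃ t : ℝ, emb z = x + t • θ) ∧ F z ≠ 1}
/-- The unit direction ẑ* = (−z₂, z₁, 0, …, 0)/√(z₁² + z₂²) of the rational ray γ_z. -/
def zstar {d : ℕ} (hd : 2 ≤ d) (z : Fin d → ℤ) : EuclideanSpace ℝ (Fin d) :=
  WithLp.toLp 2 (fun i : Fin d =>
    (if (i : ℕ) = 0 then -(z ⟨1, by omega⟩ : ℝ) else if (i : ℕ) = 1 then (z ⟨0, by omega⟩ : ℝ) else 0) /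
      Real.sqrt ((z ⟨0, by omega⟩ : ℝ) ^ 2 + (z ⟨1, by omega⟩ : ℝ) ^ 2))

/-- The direction of the rational ray γ_z in ℝ^d (d ≥ 3): it is ẑ* when z₁² + z₂² ≠ 0,
and the direction (θ₁, θ₂, 0, …, 0) when z₁ = z₂ = 0. -/
def rayDir3 {d : ℕ} (hd : 3 ≤ d) (θ₁ θ₂ : ℝ) (z : Fin d → ℤ) : EuclideanSpace ℝ (Fin d) :=
  if z ⟨0, by omega⟩ = 0 ∧ z ⟨1, by omega⟩ = 0 then
    WithLp.toLp 2 (fun i : Fin d => if (i : ℕ) = 0 then θ₁ else if (i : ℕ) = 1 then θ₂ else 0)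
  else zstar (by omega) z

section OrderedProduct

variable {α M : Type*}

theorem oprodBy_eq_prod_of_pairwise [Monoid M] (Φ : α → M) (key : α → ℝ) (supp : Set α)
    (l : List α) (hl : l.Pairwise (fun a b => key b < key a)) (hmem : ∀ a, a ∈ l ↔ a ∈ supp) :
    oprodBy Φ key supp = (l.map Φ).prod := by
  have hex : ∃ l' : List α, l'.Pairwise (fun a b => key b < key a) ∧ ∀ a, a ∈ l' ↔ a ∈ supp :=
    ⟨l, hl, hmem⟩
  obtain ⟨hl', hmem'⟩ := hex.choose_spec
  have hnodup {m : List α} (hm : m.Pairwise (fun a b => key b < key a)) : m.Nodup :=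
    hm.imp fun h => by rintro rfl; exact lt_irrefl _ h
  have hchoose : hex.choose = l :=
    List.Perm.eq_of_pairwise (fun _ _ _ _ h₁ h₂ => absurd (h₁.trans h₂) (lt_irrefl _)) hl' hl <|
      (List.perm_ext_iff_of_nodup (hnodup hl') (hnodup hl)).2 fun a => by rw [hmem', hmem]
  rw [oprodBy, dif_pos hex, hchoose]

theorem Finset.exists_list_pairwise_key_lt (key : α → ℝ) (s : Finset α)
    (hkey : Set.InjOn key s) :
    ∃ l : List α, l.Pairwise (fun a b => key b < key a) ∧ ∀ a, a ∈ l ↔ a ∈ s := by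
  classical
  induction s using Finset.induction_on_max_value key with
  | empty => exact ⟨[], .nil, by simp⟩
  | insert b s hb hmax ih =>
    obtain ⟨l, hl, hmem⟩ := ih (hkey.mono (by simp))
    refine ⟨b :: l, List.pairwise_cons.2 ⟨fun a ha => ?_, hl⟩, by simp [hmem]⟩
    have has : a ∈ s := (hmem a).1 ha
    refine (hmax a has).lt_of_ne fun h => hb ?_
    rwa [← hkey (by simp [has]) (by simp) h]

theorem List.prod_map_filter_ne_one [Monoid M] [DecidableEq M] (Φ : α → M) (l : List α) :
    ((l.filter fun a => Φ a ≠ 1).map Φ).prod = (l.map Φ).prod := by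
  induction l with
  | nil => rfl
  | cons a l ih => by_cases h : Φ a = 1 <;> simp_all

theorem oprodBy_eq_prod_of_subset [Monoid M] (Φ : α → M) (key : α → ℝ) (P : α → Prop)
    (l : List α) (hl : l.Pairwise (fun a b => key b < key a)) (hlP : ∀ a ∈ l, P a)
    (hsupp : ∀ a, P a → Φ a ≠ 1 → a ∈ l) :
    oprodBy Φ key {a | P a ∧ Φ a ≠ 1} = (l.map Φ).prod := by
  classical
  rw [← l.prod_map_filter_ne_one Φ]
  refine oprodBy_eq_prod_of_pairwise Φ key _ _ (hl.sublist List.filter_sublist) fun a => ?_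
  simp only [List.mem_filter, decide_eq_true_eq, Set.mem_ofPred_eq]
  exact ⟨fun h => ⟨hlP a h.1, h.2⟩, fun h => ⟨hsupp a h.1 h.2, h.2⟩⟩

theorem List.apply_eq_of_prod_map_eq [CancelMonoid M] {Φ Ψ : α → M} {l : List α} {y : α}
    (hl : l.Nodup) (hy : y ∈ l) (hΦΨ : ∀ a ∈ l, a ≠ y → Φ a = Ψ a)
    (h : (l.map Φ).prod = (l.map Ψ).prod) : Φ y = Ψ y := by
  obtain ⟨l₁, l₂, rfl⟩ := List.append_of_mem hy
  obtain ⟨-, hl₂, hdisj⟩ := List.nodup_append.1 hl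
  have h₁ : l₁.map Φ = l₁.map Ψ := List.map_congr_left fun a ha =>
    hΦΨ a (by simp [ha]) fun hay => hdisj a ha y List.mem_cons_self hay
  have h₂ : l₂.map Φ = l₂.map Ψ := List.map_congr_left fun a ha =>
    hΦΨ a (by simp [ha]) fun hay => (List.nodup_cons.1 hl₂).1 (hay ▸ ha)
  simp only [List.map_append, List.map_cons, List.prod_append, List.prod_cons, h₁, h₂] at h
  exact mul_right_cancel (mul_left_cancel h)

theorem apply_eq_of_oprodBy_eq [CancelMonoid M] {Φ Ψ : α → M} {key : α → ℝ} {P : α → Prop}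
    (s : Finset α) (hΦ : ∀ a, Φ a ≠ 1 → a ∈ s) (hΨ : ∀ a, Ψ a ≠ 1 → a ∈ s)
    (hkey : Set.InjOn key {a | P a}) {y : α} (hy : P y) (hΦΨ : ∀ a, P a → a ≠ y → Φ a = Ψ a)
    (h : oprodBy Φ key {a | P a ∧ Φ a ≠ 1} = oprodBy Ψ key {a | P a ∧ Ψ a ≠ 1}) :
    Φ y = Ψ y := by
  classical
  let t : Finset α := insert y ({a ∈ s | P a})
  have htP : ∀ a ∈ t, P a := by simp +contextual [t, hy]
  obtain ⟨l, hl, hmem⟩ := t.exists_list_pairwise_key_lt key (hkey.mono fun a ha => htP a ha)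
  have hlP : ∀ a ∈ l, P a := fun a ha => htP a ((hmem a).1 ha)
  have hsupp {χ : α → M} (hχ : ∀ a, χ a ≠ 1 → a ∈ s) : ∀ a, P a → χ a ≠ 1 → a ∈ l :=
    fun a ha hχa => (hmem a).2 (by simp [t, hχ a hχa, ha])
  rw [oprodBy_eq_prod_of_subset Φ key P l hl hlP (hsupp hΦ),
    oprodBy_eq_prod_of_subset Ψ key P l hl hlP (hsupp hΨ)] at h
  exact List.apply_eq_of_prod_map_eq (hl.imp fun h => by rintro rfl; exact lt_irrefl _ h)
    ((hmem y).2 (by simp [t])) (fun a ha => hΦΨ a (hlP a ha)) h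

end OrderedProduct

open scoped RealInnerProductSpace

theorem norm_lt_norm_add_smul {E : Type*} [NormedAddCommGroup E] [InnerProductSpace ℝ E]
    {x v : E} (hxv : ⟪x, v⟫ = 0) (hv : v ≠ 0) {t : ℝ} (ht : t ≠ 0) : ‖x‖ < ‖x + t • v‖ := by
  have hsq : ‖x + t • v‖ ^ 2 = ‖x‖ ^ 2 + ‖t • v‖ ^ 2 := by
    rw [norm_add_sq_real, real_inner_smul_right, hxv]; ring
  have hpos : 0 < ‖t • v‖ := norm_pos_iff.2 (smul_ne_zero ht hv)
  exact lt_of_pow_lt_pow_left₀ 2 (norm_nonneg _) (by nlinarith)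

theorem emb_injective {d : ℕ} : Function.Injective (emb (d := d)) := fun a b h =>
  funext fun i => by simpa [emb] using congrFun (congrArg WithLp.ofLp h) i

theorem sum_sub_mul_eq_inner {d : ℕ} (z : Fin d → ℤ) (x θ : EuclideanSpace ℝ (Fin d)) :
    ∑ i, ((z i : ℝ) - x i) * θ i = ⟪θ, emb z - x⟫ := by
  simp [PiLp.inner_apply, emb]

theorem injOn_discS_key {d : ℕ} (x : EuclideanSpace ℝ (Fin d)) {θ : EuclideanSpace ℝ (Fin d)}
    (hθ : θ ≠ 0) :
    Set.InjOn (fun z => ∑ i, ((z i : ℝ) - x i) * θ i) {z | ∃ t : ℝ, emb z = x + t • θ} := by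
  rintro a ⟨s, hs⟩ b ⟨t, ht⟩ hab
  simp only [sum_sub_mul_eq_inner, hs, ht, add_sub_cancel_left, real_inner_smul_right] at hab
  rw [mul_left_inj' (inner_self_ne_zero.2 hθ)] at hab
  exact emb_injective (by rw [hs, ht, hab])

theorem finite_setOf_norm_emb_le {d : ℕ} (r : ℝ) : {z : Fin d → ℤ | ‖emb z‖ ≤ r}.Finite := by
  refine (Set.finite_Icc (-fun _ => ⌈r⌉) fun _ => ⌈r⌉).subset fun z hz => ?_
  have hcoord (i : Fin d) : |z i| ≤ ⌈r⌉ := by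
    have : |(z i : ℝ)| ≤ r := by simpa [emb] using (PiLp.norm_apply_le (emb z) i).trans hz
    exact_mod_cast this.trans (Int.le_ceil r)
  exact ⟨fun i => (abs_le.1 (hcoord i)).1, fun i => (abs_le.1 (hcoord i)).2⟩

section RayDirection

variable {d : ℕ} (hd : 3 ≤ d) (θ₁ θ₂ : ℝ) (y : Fin d → ℤ)

theorem rayDir3_apply_of_two_le {i : Fin d} (hi : 2 ≤ (i : ℕ)) : rayDir3 hd θ₁ θ₂ y i = 0 := by
  unfold rayDir3 zstar
  split_ifs <;> simp [show (i : ℕ) ≠ 0 by omega, show (i : ℕ) ≠ 1 by omega]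

theorem inner_emb_rayDir3 : ⟪emb y, rayDir3 hd θ₁ θ₂ y⟫ = 0 := by
  rw [PiLp.inner_apply, Fintype.sum_eq_add ⟨0, by omega⟩ ⟨1, by omega⟩ (by simp [Fin.ext_iff])]
  · unfold rayDir3 zstar
    split_ifs with hy
    · simp [emb, hy.1, hy.2]
    · simp only [emb, ↓reduceIte, RCLike.inner_apply, map_intCast, one_ne_zero]
      ring
  · rintro i ⟨hi₀, hi₁⟩
    have : 2 ≤ (i : ℕ) := by
      by_contra!
      interval_cases h : (i : ℕ)
      exacts [hi₀ (Fin.ext h), hi₁ (Fin.ext h)]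
    simp [rayDir3_apply_of_two_le hd θ₁ θ₂ y this]

theorem rayDir3_ne_zero (hθ : θ₁ ≠ 0 ∨ θ₂ ≠ 0) : rayDir3 hd θ₁ θ₂ y ≠ 0 := by
  intro h0
  have h₀ := congrFun (congrArg WithLp.ofLp h0) ⟨0, by omega⟩
  have h₁ := congrFun (congrArg WithLp.ofLp h0) ⟨1, by omega⟩
  unfold rayDir3 zstar at h₀ h₁
  split_ifs at h₀ h₁ with hy
  · simp_all
  · have hpos : 0 < (y ⟨0, by omega⟩ : ℝ) ^ 2 + (y ⟨1, by omega⟩ : ℝ) ^ 2 := by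
      rcases not_and_or.1 hy with h | h <;> positivity
    simp [(Real.sqrt_pos.2 hpos).ne'] at h₀ h₁
    exact hy ⟨h₁, h₀⟩

end RayDirection

theorem ne_zero_or_ne_zero_of_rational_direction {θ₁ θ₂ : ℝ}
    (hθ : ∃ w : Fin 2 → ℤ, w ≠ 0 ∧ θ₁ = (w 0 : ℝ) / ‖emb w‖ ∧ θ₂ = (w 1 : ℝ) / ‖emb w‖) :
    θ₁ ≠ 0 ∨ θ₂ ≠ 0 := by
  obtain ⟨w, hw, rfl, rfl⟩ := hθ
  have hnorm : ‖emb w‖ ≠ 0 :=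
    norm_ne_zero_iff.2 fun h => hw (emb_injective (by rw [h]; ext; simp [emb]))
  by_contra! h
  simp only [div_eq_zero_iff, hnorm, or_false, Int.cast_eq_zero] at h
  exact hw (funext fun i => by fin_cases i <;> simp [h])

theorem stmt8_general (d n : ℕ) (hd : 3 ≤ d) (r : ℝ)
    (θ₁ θ₂ : ℝ)
    (hθ : ∃ w : Fin 2 → ℤ, w ≠ 0 ∧ θ₁ = (w 0 : ℝ) / ‖emb w‖ ∧ θ₂ = (w 1 : ℝ) / ‖emb w‖)
    (F G : (Fin d → ℤ) → GL (Fin n) ℂ)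
    (hF : ∀ y : Fin d → ℤ, ¬ ‖emb y‖ ≤ r → F y = 1)
    (hG : ∀ y : Fin d → ℤ, ¬ ‖emb y‖ ≤ r → G y = 1)
    (h : ∀ z : Fin d → ℤ, discS F (emb z) (rayDir3 hd θ₁ θ₂ z) = discS G (emb z) (rayDir3 hd θ₁ θ₂ z)) :
    F = G := by
  have hball := finite_setOf_norm_emb_le (d := d) r
  by_contra hFG
  obtain ⟨y, hy, hmax⟩ := Set.exists_max_image {y | F y ≠ G y} (‖emb ·‖)
    (hball.subset fun y hy => by_contra fun hr => hy (by rw [hF y hr, hG y hr]))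
    (Function.ne_iff.1 hFG)
  have hθy := rayDir3_ne_zero hd θ₁ θ₂ y (ne_zero_or_ne_zero_of_rational_direction hθ)
  refine hy (apply_eq_of_oprodBy_eq hball.toFinset
    (fun a ha => by simpa using not_imp_comm.1 (hF a) ha)
    (fun a ha => by simpa using not_imp_comm.1 (hG a) ha)
    (injOn_discS_key (emb y) hθy) ⟨0, by simp⟩ ?_ (h y))
  rintro a ⟨t, ht⟩ hay
  by_contra hFa
  have ht0 : t ≠ 0 := fun ht0 => hay (emb_injective (by simp [ht, ht0]))
  have hlt := norm_lt_norm_add_smul (inner_emb_rayDir3 hd θ₁ θ₂ y) hθy ht0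
  exact (hmax a hFa).not_gt (ht ▸ hlt)

/-- Theorem 2.1, d ≥ 3, uniqueness: the discrete non-abelian X-ray
transform on the rational rays γ_z, z ∈ ℤ^d, uniquely determines a function
F : ℤ^d → GL(n,ℂ) equal to I outside B_r ∩ ℤ^d. -/
theorem stmt8 (d n : ℕ) (hd : 3 ≤ d) (hn : 1 ≤ n) (r : ℝ) (hr : 0 < r)
    (θ₁ θ₂ : ℝ)
    (hθ : ∃ w : Fin 2 → ℤ, w ≠ 0 ∧ θ₁ = (w 0 : ℝ) / ‖emb w‖ ∧ θ₂ = (w 1 : ℝ) / ‖emb w‖)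
    (F G : (Fin d → ℤ) → GL (Fin n) ℂ)
    (hF : ∀ y : Fin d → ℤ, ¬ ‖emb y‖ ≤ r → F y = 1)
    (hG : ∀ y : Fin d → ℤ, ¬ ‖emb y‖ ≤ r → G y = 1)
    (h : ∀ z : Fin d → ℤ, discS F (emb z) (rayDir3 hd θ₁ θ₂ z) = discS G (emb z) (rayDir3 hd θ₁ θ₂ z)) :
    F = G :=
  stmt8_general d n hd r θ₁ θ₂ hθ F G hF hG h
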